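/- Let α, β, γ, λ, μ be real numbers and let N(α,β,γ,λ,μ) be the 3×3 real matrix whose rows are (α,β,γ), (λα,λβ,λγ), (μα,μβ,μγ). Suppose α ≠ 0 and α² + λβ² + μγ² = 0. If one of the following holds: (1) γ = 0, λβμ ≠ 0 and μ > 0; (2) β = 0, λγμ ≠ 0 and λ > 0; (3) λβγμ ≠ 0; then the evolution algebra E_{N(α,β,γ,λ,μ)} is isomorphic to the evolution algebra E₂ whose structure matrix has rows (1,1,0), (−1,−1,0), (1,1,0). -/

import Mathlib

/-- Evolution algebra multiplication on ℝ³ determined by a structure matrix `A`: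
`(x ∗_A y) j = ∑ i, x i * y i * A i j`. -/
def evolMul (A : Matrix (Fin 3) (Fin 3) ℝ) (x y : Fin 3 → ℝ) : Fin 3 → ℝ :=
  fun j => ∑ i, x i * y i * A i j

/-- The evolution algebras with structure matrices `A` and `B` are isomorphic:
there is an ℝ-linear equivalence of ℝ³ intertwining the two multiplications. -/
def EvolIso (A B : Matrix (Fin 3) (Fin 3) ℝ) : Prop :=
  ∃ f : (Fin 3 → ℝ) ≃ₗ[ℝ] (Fin 3 → ℝ),
    ∀ x y, f (evolMul A x y) = evolMul B (f x) (f y)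

/-!
Both algebras are of rank one: `x * y = Q(x, y) • w`, where `Q` is the diagonal form
`diag(1, λ, μ)` (resp. `diag(1, -1, 1)`) and `w = (α, β, γ)` (resp. `(1, 1, 0)`) is isotropic.
A linear map `f` with `Q'(f x, f y) = k Q(x, y)` and `f w = k w'` intertwines the two products,
and it is injective because `Q` is nondegenerate (`λ μ ≠ 0`) and `k ≠ 0`. For `k = -λμ` such an
`f` is given by an explicit matrix, the identities it must satisfy holding modulo
`α² + λβ² + μγ² = 0`.
-/

open Matrix

theorem evolMul_vecMulVec (d w x y : Fin 3 → ℝ) :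
    evolMul (vecMulVec d w) x y = (d ⬝ᵥ (x * y)) • w := by
  ext j
  simp only [evolMul, vecMulVec_apply, dotProduct, Pi.mul_apply, Pi.smul_apply, smul_eq_mul,
    Finset.sum_mul]
  exact Finset.sum_congr rfl fun i _ => by ring

theorem injective_of_diagonal_similarity {ι : Type*} [Fintype ι] [DecidableEq ι]
    {f : (ι → ℝ) →ₗ[ℝ] (ι → ℝ)} {d d' : ι → ℝ} {k : ℝ} (hd : ∀ i, d i ≠ 0) (hk : k ≠ 0)
    (hf : ∀ x y, d' ⬝ᵥ (f x * f y) = k * d ⬝ᵥ (x * y)) :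
    Function.Injective f := by
  refine (injective_iff_map_eq_zero f).2 fun x hx => funext fun i => ?_
  have h := hf x (Pi.single i 1)
  rw [hx, zero_mul, dotProduct_zero, ← Pi.single_mul_right, dotProduct_single, mul_one] at h
  simpa [hk, hd i] using h.symm

theorem evolIso_vecMulVec {d d' w w' : Fin 3 → ℝ} (f : (Fin 3 → ℝ) →ₗ[ℝ] (Fin 3 → ℝ)) {k : ℝ}
    (hd : ∀ i, d i ≠ 0) (hk : k ≠ 0)
    (hf : ∀ x y, d' ⬝ᵥ (f x * f y) = k * d ⬝ᵥ (x * y)) (hw : f w = k • w') :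
    EvolIso (vecMulVec d w) (vecMulVec d' w') := by
  refine ⟨LinearEquiv.ofInjectiveEndo f (injective_of_diagonal_similarity hd hk hf), fun x y => ?_⟩
  rw [LinearEquiv.coe_ofInjectiveEndo, evolMul_vecMulVec, evolMul_vecMulVec, map_smul, hw, hf,
    smul_smul, mul_comm]

noncomputable def isoMatrix (a b c l m : ℝ) : Matrix (Fin 3) (Fin 3) ℝ :=
  (2 * a ^ 2)⁻¹ •
    !![a * (a ^ 2 - l * m), l * b * (l * m + a ^ 2), m * c * (l * m + a ^ 2);
       -(a * (a ^ 2 + l * m)), l * b * (l * m - a ^ 2), m * c * (l * m - a ^ 2);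
       0, -(2 * a * c * l * m), 2 * a * b * l * m]

section

variable {a b c l m : ℝ}

theorem isoMatrix_mulVec (ha : a ≠ 0) (hq : a ^ 2 + l * b ^ 2 + m * c ^ 2 = 0) :
    isoMatrix a b c l m *ᵥ ![a, b, c] = (-(l * m)) • ![1, 1, 0] := by
  simp only [isoMatrix, smul_mulVec, smul_cons, smul_empty, smul_eq_mul, cons_mulVec, empty_mulVec,
    vec3_dotProduct, cons_val_zero, cons_val_one, cons_val_two, head_cons, tail_cons]
  refine vec3_eq ?_ ?_ ?_ <;> field_simp
  · linear_combination (l * m + a ^ 2) * hq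
  · linear_combination (l * m - a ^ 2) * hq
  · ring

theorem isoMatrix_similarity (ha : a ≠ 0) (hq : a ^ 2 + l * b ^ 2 + m * c ^ 2 = 0)
    (x y : Fin 3 → ℝ) :
    ![1, -1, 1] ⬝ᵥ (isoMatrix a b c l m *ᵥ x * isoMatrix a b c l m *ᵥ y) =
      -(l * m) * ![1, l, m] ⬝ᵥ (x * y) := by
  simp only [isoMatrix, smul_mulVec, smul_cons, smul_empty, smul_eq_mul, cons_mulVec, empty_mulVec,
    vec3_dotProduct, cons_val_zero, cons_val_one, cons_val_two, head_cons, tail_cons, Pi.mul_apply]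
  field_simp
  linear_combination
    (4 * a ^ 2 * l ^ 2 * m * (x 1 * y 1) + 4 * a ^ 2 * l * m ^ 2 * (x 2 * y 2)) * hq

end

theorem stmt (a b c l m : ℝ)
    (ha : a ≠ 0) (hq : a ^ 2 + l * b ^ 2 + m * c ^ 2 = 0)
    (hcond : (c = 0 ∧ l * b * m ≠ 0 ∧ m > 0) ∨ (b = 0 ∧ l * c * m ≠ 0 ∧ l > 0) ∨
             l * b * c * m ≠ 0) :
    EvolIso (!![a, b, c; l * a, l * b, l * c; m * a, m * b, m * c] : Matrix (Fin 3) (Fin 3) ℝ) (!![1, 1, 0; -1, -1, 0; 1, 1, 0] : Matrix (Fin 3) (Fin 3) ℝ) := by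
  obtain ⟨hl, hm⟩ : l ≠ 0 ∧ m ≠ 0 := by
    rcases hcond with ⟨-, h, -⟩ | ⟨-, h, -⟩ | h <;>
      simp only [ne_eq, mul_eq_zero, not_or] at h <;> tauto
  have hA : !![a, b, c; l * a, l * b, l * c; m * a, m * b, m * c] =
      vecMulVec ![1, l, m] ![a, b, c] := by
    ext i j; fin_cases i <;> fin_cases j <;> simp [vecMulVec_apply]
  have hB : !![1, 1, 0; -1, -1, 0; 1, 1, 0] = vecMulVec ![1, -1, 1] ![(1 : ℝ), 1, 0] := by
    ext i j; fin_cases i <;> fin_cases j <;> simp [vecMulVec_apply]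
  have hd : ∀ i, ![1, l, m] i ≠ 0 := by
    intro i; fin_cases i <;> simp [hl, hm]
  rw [hA, hB]
  exact evolIso_vecMulVec (isoMatrix a b c l m).mulVecLin hd (neg_ne_zero.2 (mul_ne_zero hl hm))
    (isoMatrix_similarity ha hq) (isoMatrix_mulVec ha hq)
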